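/- arXiv:1802.09279 — 2 statements merged into one kernel-verified Lean document; each statement's English description precedes it below -/
import Mathlib

section
/- Let b > 1 be a real number, σ₁, ς₂, ς₃ > 0 real numbers, k₀, k₂ ≥ 0 and k₁ ≥ 1 integers, and let J = {z ∈ ℂ : c ≤ Im z ≤ d, Re z ≤ 0} be a closed horizontal strip. Then there exists a constant C > 0, depending only on k₀, k₁, k₂, σ₁, ς₂, ς₃ and b (independent of ε, β and v), such that for every ε ∈ ℂ with ε ≠ 0, every integer β ≥ k₁, every real N ≥ 0 and every function v : ℂ → ℂ satisfying |v(τ)| ≤ N |τ| exp((σ₁/|ε|) r_b(β−k₁) |τ| + ς₂ r_b(β−k₁) exp(ς₃ |τ|)) for all τ ∈ J, one has |τ^{k₀} exp(−k₂ τ) v(τ)| ≤ C |ε|^{k₀} (β+1)^{b k₀ + k₂ b/ς₃} N |τ| exp((σ₁/|ε|) r_b(β) |τ| + ς₂ r_b(β) exp(ς₃ |τ|)) for all τ ∈ J. -/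
/-! Let `P = (β + 1) ^ b`. Since `β - k₁ < β`, the weight `r_b(β)` exceeds `r_b(β - k₁)` by at
least its last term `1 / P`, so the right-hand side gains the factor
`exp ((σ₁ / |ε|) |τ| / P + ς₂ exp (ς₃ |τ|) / P)` over the bound on `v`. Its first part absorbs
`|τ| ^ k₀ ≤ k₀! (|ε| P / σ₁) ^ k₀ exp ((σ₁ / |ε|) |τ| / P)`; for its second part write
`exp (k₂ |τ|) = E ^ (k₂ / ς₃) = P ^ (k₂ / ς₃) (E / P) ^ (k₂ / ς₃)` with `E = exp (ς₃ |τ|)`, and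
bound the polynomial `(E / P) ^ (k₂ / ς₃)` by a constant times `exp (ς₂ E / P)`. -/

/-- `r_b(β) = Σ_{n=0}^{β} 1/(n+1)^b`. -/
noncomputable def rb (b : ℝ) (β : ℕ) : ℝ := ∑ n ∈ Finset.range (β + 1), 1 / ((n : ℝ) + 1) ^ b

/-- The closed horizontal strip `{z : c ≤ Im z ≤ d, Re z ≤ 0}`. -/
def strip (c d : ℝ) : Set ℂ := {z : ℂ | c ≤ z.im ∧ z.im ≤ d ∧ z.re ≤ 0}

open Real
open scoped Nat

lemma rb_succ (b : ℝ) (n : ℕ) : rb b (n + 1) = rb b n + 1 / ((n : ℝ) + 1 + 1) ^ b := by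
  rw [rb, Finset.sum_range_succ, ← rb]
  push_cast
  rfl

lemma rb_mono (b : ℝ) : Monotone (rb b) := fun _ _ hmn =>
  Finset.sum_le_sum_of_subset_of_nonneg (Finset.range_subset_range.2 (by omega))
    fun _ _ _ => by positivity

lemma rb_sub_add_le (b : ℝ) {k β : ℕ} (hk : 1 ≤ k) (hkβ : k ≤ β) :
    rb b (β - k) + 1 / ((β : ℝ) + 1) ^ b ≤ rb b β := by
  obtain ⟨γ, rfl⟩ : ∃ γ, β = γ + 1 := ⟨β - 1, by omega⟩
  have hmono := rb_mono b (show γ + 1 - k ≤ γ by omega)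
  rw [rb_succ]
  push_cast
  linarith

lemma pow_le_factorial_div_pow_mul_exp {a t : ℝ} (ha : 0 < a) (ht : 0 ≤ t) (n : ℕ) :
    t ^ n ≤ n ! / a ^ n * exp (a * t) := by
  have h := pow_div_factorial_le_exp (a * t) (by positivity) n
  rw [div_le_iff₀ (by positivity), mul_pow] at h
  rw [div_mul_eq_mul_div, le_div_iff₀ (by positivity)]
  linarith

lemma rpow_le_one_add_pow {x p : ℝ} (hx : 0 ≤ x) (hp : 0 ≤ p) {n : ℕ} (hpn : p ≤ n) :
    x ^ p ≤ 1 + x ^ n := by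
  rcases le_total x 1 with h | h
  · linarith [rpow_le_one hx h hp, pow_nonneg hx n]
  · have h1 := rpow_le_rpow_of_exponent_le h hpn
    rw [rpow_natCast] at h1
    linarith

lemma rpow_le_mul_exp {x p s : ℝ} (hx : 0 ≤ x) (hp : 0 ≤ p) (hs : 0 < s) :
    x ^ p ≤ (1 + ⌈p⌉₊ ! / s ^ ⌈p⌉₊) * exp (s * x) := calc
  x ^ p ≤ 1 + x ^ ⌈p⌉₊ := rpow_le_one_add_pow hx hp (Nat.le_ceil p)
  _ ≤ exp (s * x) + ⌈p⌉₊ ! / s ^ ⌈p⌉₊ * exp (s * x) :=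
    add_le_add (one_le_exp (by positivity)) (pow_le_factorial_div_pow_mul_exp hs hx _)
  _ = _ := by ring

lemma exp_mul_le_rpow_mul_exp {k ς s P : ℝ} (hk : 0 ≤ k) (hς : 0 < ς) (hs : 0 < s) (hP : 0 < P)
    (u : ℝ) :
    exp (k * u) ≤
      (1 + ⌈k / ς⌉₊ ! / s ^ ⌈k / ς⌉₊) * P ^ (k / ς) * exp (s * (exp (ς * u) / P)) := by
  have hsplit : exp (k * u) = P ^ (k / ς) * (exp (ς * u) / P) ^ (k / ς) := by
    rw [← mul_rpow hP.le (by positivity), mul_div_cancel₀ _ hP.ne', ← exp_mul]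
    field_simp
  rw [hsplit, mul_comm _ (P ^ (k / ς)), mul_assoc]
  gcongr
  exact rpow_le_mul_exp (by positivity) (by positivity) hs

lemma exists_pow_mul_exp_le (n : ℕ) {σ ς₂ ς₃ k : ℝ} (hσ : 0 < σ) (hς₂ : 0 < ς₂) (hς₃ : 0 < ς₃)
    (hk : 0 ≤ k) :
    ∃ C : ℝ, 0 < C ∧ ∀ t : ℝ, 0 ≤ t → ∀ e : ℝ, 0 < e → ∀ P : ℝ, 0 < P →
      t ^ n * exp (k * t) ≤
        C * e ^ n * P ^ ((n : ℝ) + k / ς₃) * exp ((σ / e * t + ς₂ * exp (ς₃ * t)) / P) := by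
  refine ⟨n ! / σ ^ n * (1 + ⌈k / ς₃⌉₊ ! / ς₂ ^ ⌈k / ς₃⌉₊), by positivity, ?_⟩
  intro t ht e he P hP
  have hpow := pow_le_factorial_div_pow_mul_exp (a := σ / (e * P)) (by positivity) ht n
  have hexp := exp_mul_le_rpow_mul_exp hk hς₃ hς₂ hP t
  calc t ^ n * exp (k * t)
      ≤ n ! / (σ / (e * P)) ^ n * exp (σ / (e * P) * t) *
          ((1 + ⌈k / ς₃⌉₊ ! / ς₂ ^ ⌈k / ς₃⌉₊) * P ^ (k / ς₃) *
            exp (ς₂ * (exp (ς₃ * t) / P))) := by gcongr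
    _ = _ := by
      rw [rpow_add hP, rpow_natCast, add_div, exp_add, div_pow, mul_pow]
      field_simp

theorem stmt6_general (b : ℝ)
    (σ₁ ς₂ ς₃ : ℝ) (hσ₁ : 0 < σ₁) (hς₂ : 0 < ς₂) (hς₃ : 0 < ς₃)
    (k₀ k₁ k₂ : ℕ) (hk₁ : 1 ≤ k₁) :
    ∃ C : ℝ, 0 < C ∧ ∀ c d : ℝ, c < d →
      ∀ (ε : ℂ), ε ≠ 0 → ∀ β : ℕ, k₁ ≤ β → ∀ N : ℝ, 0 ≤ N →
      ∀ v : ℂ → ℂ,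
        (∀ τ ∈ strip c d, ‖v τ‖ ≤ N * ‖τ‖ *
          Real.exp (σ₁ / ‖ε‖ * rb b (β - k₁) * ‖τ‖
            + ς₂ * rb b (β - k₁) * Real.exp (ς₃ * ‖τ‖))) →
        ∀ τ ∈ strip c d,
          ‖τ ^ k₀ * Complex.exp (-(k₂ : ℂ) * τ) * v τ‖ ≤
            C * ‖ε‖ ^ k₀ *
              ((β : ℝ) + 1) ^ (b * (k₀ : ℝ) + (k₂ : ℝ) * b / ς₃) *
              N * ‖τ‖ *
              Real.exp (σ₁ / ‖ε‖ * rb b β * ‖τ‖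
                + ς₂ * rb b β * Real.exp (ς₃ * ‖τ‖)) := by
  obtain ⟨C, hC, hweight⟩ := exists_pow_mul_exp_le k₀ hσ₁ hς₂ hς₃ k₂.cast_nonneg
  refine ⟨C, hC, fun c d _ ε hε β hβ N hN v hv τ hτ => ?_⟩
  have hβ1 : (0 : ℝ) < β + 1 := by positivity
  set P := ((β : ℝ) + 1) ^ b
  set X := σ₁ / ‖ε‖ * ‖τ‖ + ς₂ * exp (ς₃ * ‖τ‖)
  set A := σ₁ / ‖ε‖ * rb b (β - k₁) * ‖τ‖ + ς₂ * rb b (β - k₁) * exp (ς₃ * ‖τ‖)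
  have hexp : X / P + A ≤ σ₁ / ‖ε‖ * rb b β * ‖τ‖ + ς₂ * rb b β * exp (ς₃ * ‖τ‖) := calc
    _ = X * (rb b (β - k₁) + 1 / P) := by simp only [X, A]; ring
    _ ≤ X * rb b β := by gcongr; exact rb_sub_add_le b hk₁ hβ
    _ = _ := by simp only [X]; ring
  have hP : P ^ ((k₀ : ℝ) + k₂ / ς₃) = ((β : ℝ) + 1) ^ (b * k₀ + k₂ * b / ς₃) := by
    rw [← rpow_mul hβ1.le]
    ring_nf
  have hnorm : ‖Complex.exp (-(k₂ : ℂ) * τ)‖ ≤ exp (k₂ * ‖τ‖) := by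
    simpa using Complex.norm_exp_le_exp_norm (-(k₂ : ℂ) * τ)
  calc
    _ ≤ ‖τ‖ ^ k₀ * exp (k₂ * ‖τ‖) * (N * ‖τ‖ * exp A) := by
      rw [norm_mul, norm_mul, norm_pow]
      gcongr
      exact hv τ hτ
    _ ≤ C * ‖ε‖ ^ k₀ * P ^ ((k₀ : ℝ) + k₂ / ς₃) * exp (X / P) * (N * ‖τ‖ * exp A) :=
      mul_le_mul_of_nonneg_right
        (hweight _ (norm_nonneg τ) _ (norm_pos_iff.2 hε) P (by positivity)) (by positivity)
    _ = C * ‖ε‖ ^ k₀ * ((β : ℝ) + 1) ^ (b * k₀ + k₂ * b / ς₃) * N * ‖τ‖ * exp (X / P + A) := by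
      rw [hP, exp_add (X / P)]
      ring
    _ ≤ _ := by gcongr

/-- The constant `C` depends only on `k₀, k₁, k₂, σ₁, ς₂, ς₃, b`; it is independent of
the strip, `ε`, `β` and `v`. -/
theorem stmt6 (b : ℝ) (hb : 1 < b)
    (σ₁ ς₂ ς₃ : ℝ) (hσ₁ : 0 < σ₁) (hς₂ : 0 < ς₂) (hς₃ : 0 < ς₃)
    (k₀ k₁ k₂ : ℕ) (hk₁ : 1 ≤ k₁) :
    ∃ C : ℝ, 0 < C ∧ ∀ c d : ℝ, c < d →
      ∀ (ε : ℂ), ε ≠ 0 → ∀ β : ℕ, k₁ ≤ β → ∀ N : ℝ, 0 ≤ N →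
      ∀ v : ℂ → ℂ,
        (∀ τ ∈ strip c d, ‖v τ‖ ≤ N * ‖τ‖ *
          Real.exp (σ₁ / ‖ε‖ * rb b (β - k₁) * ‖τ‖
            + ς₂ * rb b (β - k₁) * Real.exp (ς₃ * ‖τ‖))) →
        ∀ τ ∈ strip c d,
          ‖τ ^ k₀ * Complex.exp (-(k₂ : ℂ) * τ) * v τ‖ ≤
            C * ‖ε‖ ^ k₀ *
              ((β : ℝ) + 1) ^ (b * (k₀ : ℝ) + (k₂ : ℝ) * b / ς₃) *
              N * ‖τ‖ *
              Real.exp (σ₁ / ‖ε‖ * rb b β * ‖τ‖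
                + ς₂ * rb b β * Real.exp (ς₃ * ‖τ‖)) :=
  stmt6_general b σ₁ ς₂ ς₃ hσ₁ hς₂ hς₃ k₀ k₁ k₂ hk₁
end

section
/- Let b > 1 be a real number, σ₁ > σ₁' > 0 real numbers, and γ₀, γ₁ ≥ 0 integers. Then there exists a constant Č > 0, depending only on γ₀, γ₁, σ₁ and σ₁' (independent of ε, β, τ, c and v), such that the following holds: for every ε ∈ ℂ with ε ≠ 0, every integer β ≥ 0, every real N ≥ 0, all τ, c ∈ ℂ with |c| ≤ |τ|, and every function v : ℂ → ℂ with u ↦ v(uc) and u ↦ v((1−u)c + uτ) continuous on [0,1], satisfying |v(s)| ≤ N |s| exp((σ₁'/|ε|) r_b(β) |s|) at every point s = uc and s = (1−u)c + uτ with u ∈ [0,1], one has |τ| · | c ∫_0^1 (τ − uc)^{γ₀} (uc)^{γ₁} v(uc) du + (τ − c) ∫_0^1 (τ − ((1−u)c + uτ))^{γ₀} ((1−u)c + uτ)^{γ₁} v((1−u)c + uτ) du | ≤ Č |ε|^{γ₀+γ₁+2} N |τ| exp((σ₁/|ε|) r_b(β) |τ|). -/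
/-!
Every point `s` of the path satisfies `‖s‖ ≤ ‖τ‖` and `‖τ - s‖ ≤ 2‖τ‖`, so both integrands are
bounded by `2^γ₀ N ‖τ‖^(γ₀+γ₁+1) e^(a‖τ‖)` with `a = σ₁' r_b(β) / ‖ε‖`, and the left-hand side by
`3 · 2^γ₀ N ‖τ‖ · ‖τ‖^(γ₀+γ₁+2) e^(a‖τ‖)`. The surplus power `‖τ‖^(γ₀+γ₁+2)` is absorbed by the
spare exponential `e^((σ₁-σ₁') r_b(β) ‖τ‖ / ‖ε‖)` via `x^k ≤ k! e^x` and `r_b(β) ≥ 1`; this is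
where the factor `‖ε‖^(γ₀+γ₁+2)` comes from.
-/

open Set Nat

lemma one_le_rb (b : ℝ) (β : ℕ) : 1 ≤ rb b β := by
  have h := Finset.single_le_sum (f := fun n : ℕ => 1 / ((n : ℝ) + 1) ^ b)
    (fun n _ => by positivity) (Finset.mem_range.2 β.succ_pos)
  simpa [rb, Real.one_rpow] using h

lemma pow_le_factorial_div_pow_mul_exp_s14 {d δ x : ℝ} (hd : 0 < d) (hdδ : d ≤ δ) (hx : 0 ≤ x)
    (k : ℕ) : x ^ k ≤ k ! / d ^ k * Real.exp (δ * x) := by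
  calc x ^ k = (d * x) ^ k / k ! * (k ! / d ^ k) := by field_simp; ring
    _ ≤ Real.exp (d * x) * (k ! / d ^ k) := by
        gcongr; exact Real.pow_div_factorial_le_exp _ (by positivity) k
    _ ≤ Real.exp (δ * x) * (k ! / d ^ k) := by gcongr
    _ = k ! / d ^ k * Real.exp (δ * x) := mul_comm _ _

section Path

variable {c τ : ℂ} {u : ℝ}

lemma norm_ofReal_mul_le (hu : u ∈ Icc (0 : ℝ) 1) (hc : ‖c‖ ≤ ‖τ‖) : ‖(u : ℂ) * c‖ ≤ ‖τ‖ := by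
  rw [norm_mul, Complex.norm_real, Real.norm_of_nonneg hu.1]
  exact (mul_le_mul hu.2 hc (norm_nonneg c) zero_le_one).trans_eq (one_mul _)

lemma norm_one_sub_mul_add_mul_le (hu : u ∈ Icc (0 : ℝ) 1) (hc : ‖c‖ ≤ ‖τ‖) :
    ‖(1 - (u : ℂ)) * c + (u : ℂ) * τ‖ ≤ ‖τ‖ := by
  have h1u : (1 - (u : ℂ)) = ((1 - u : ℝ) : ℂ) := by push_cast; ring
  calc ‖(1 - (u : ℂ)) * c + (u : ℂ) * τ‖ ≤ (1 - u) * ‖c‖ + u * ‖τ‖ := by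
        refine (norm_add_le _ _).trans_eq ?_
        rw [h1u, norm_mul, norm_mul, Complex.norm_real, Complex.norm_real,
          Real.norm_of_nonneg (sub_nonneg.2 hu.2), Real.norm_of_nonneg hu.1]
    _ ≤ (1 - u) * ‖τ‖ + u * ‖τ‖ := by gcongr; exact sub_nonneg.2 hu.2
    _ = ‖τ‖ := by ring

end Path

section Integrand

variable {τ s : ℂ} {v : ℂ → ℂ} {N a : ℝ} (γ₀ γ₁ : ℕ)

lemma norm_convolution_integrand_le (hN : 0 ≤ N) (ha : 0 ≤ a) (hs : ‖s‖ ≤ ‖τ‖)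
    (hv : ‖v s‖ ≤ N * ‖s‖ * Real.exp (a * ‖s‖)) :
    ‖(τ - s) ^ γ₀ * s ^ γ₁ * v s‖ ≤
      2 ^ γ₀ * ‖τ‖ ^ (γ₀ + γ₁ + 1) * N * Real.exp (a * ‖τ‖) := by
  have hτs : ‖τ - s‖ ≤ 2 * ‖τ‖ := (norm_sub_le τ s).trans (by linarith)
  have hvτ : ‖v s‖ ≤ N * ‖τ‖ * Real.exp (a * ‖τ‖) := hv.trans (by gcongr)
  rw [norm_mul, norm_mul, norm_pow, norm_pow]
  calc ‖τ - s‖ ^ γ₀ * ‖s‖ ^ γ₁ * ‖v s‖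
      ≤ (2 * ‖τ‖) ^ γ₀ * ‖τ‖ ^ γ₁ * (N * ‖τ‖ * Real.exp (a * ‖τ‖)) := by gcongr
    _ = 2 ^ γ₀ * ‖τ‖ ^ (γ₀ + γ₁ + 1) * N * Real.exp (a * ‖τ‖) := by ring

lemma norm_integral_convolution_path_le (p : ℝ → ℂ) (hN : 0 ≤ N) (ha : 0 ≤ a)
    (hp : ∀ u ∈ Icc (0 : ℝ) 1, ‖p u‖ ≤ ‖τ‖)
    (hv : ∀ u ∈ Icc (0 : ℝ) 1, ‖v (p u)‖ ≤ N * ‖p u‖ * Real.exp (a * ‖p u‖)) :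
    ‖∫ u in (0 : ℝ)..1, (τ - p u) ^ γ₀ * p u ^ γ₁ * v (p u)‖ ≤
      2 ^ γ₀ * ‖τ‖ ^ (γ₀ + γ₁ + 1) * N * Real.exp (a * ‖τ‖) := by
  have h := intervalIntegral.norm_integral_le_of_norm_le_const (a := (0 : ℝ)) (b := 1)
    fun u hu => by
      have hu' : u ∈ Icc (0 : ℝ) 1 := Ioc_subset_Icc_self (uIoc_of_le (zero_le_one' ℝ) ▸ hu)
      exact norm_convolution_integrand_le γ₀ γ₁ hN ha (hp u hu') (hv u hu')
  simpa using h

end Integrand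

lemma norm_mul_add_sub_mul_le {c τ I₁ I₂ : ℂ} {M : ℝ} (hc : ‖c‖ ≤ ‖τ‖) (hI₁ : ‖I₁‖ ≤ M)
    (hI₂ : ‖I₂‖ ≤ M) : ‖c * I₁ + (τ - c) * I₂‖ ≤ 3 * ‖τ‖ * M := by
  have hM : 0 ≤ M := (norm_nonneg _).trans hI₁
  have hτc : ‖τ - c‖ ≤ 2 * ‖τ‖ := (norm_sub_le τ c).trans (by linarith)
  calc ‖c * I₁ + (τ - c) * I₂‖ ≤ ‖c‖ * ‖I₁‖ + ‖τ - c‖ * ‖I₂‖ := by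
        simpa only [norm_mul] using norm_add_le (c * I₁) ((τ - c) * I₂)
    _ ≤ ‖τ‖ * M + 2 * ‖τ‖ * M := by gcongr
    _ = 3 * ‖τ‖ * M := by ring

/-- Convolution bound along the piecewise-linear path `L_{0,τ} = [0,c] ∪ [c,τ]` with
`|c| ≤ |τ|`; the two integrals are parametrized by `s = uc` and `s = (1-u)c + uτ`,
`u ∈ [0,1]`.  The constant `Cc` depends only on `γ₀, γ₁, σ₁, σ₁'`; it is independent of
`b, ε, β, τ, c, v`. -/
theorem stmt14 (σ₁ σ₁' : ℝ) (hσ₁' : 0 < σ₁') (hσ₁ : σ₁' < σ₁) (γ₀ γ₁ : ℕ) :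
    ∃ Cc : ℝ, 0 < Cc ∧ ∀ b : ℝ, 1 < b →
      ∀ (ε : ℂ), ε ≠ 0 → ∀ β : ℕ, ∀ N : ℝ, 0 ≤ N →
      ∀ τ c : ℂ, ‖c‖ ≤ ‖τ‖ →
      ∀ v : ℂ → ℂ,
        ContinuousOn (fun u : ℝ => v ((u : ℂ) * c)) (Set.Icc 0 1) →
        ContinuousOn (fun u : ℝ => v ((1 - (u : ℂ)) * c + (u : ℂ) * τ)) (Set.Icc 0 1) →
        (∀ u : ℝ, u ∈ Set.Icc (0 : ℝ) 1 →
          ‖v ((u : ℂ) * c)‖ ≤ N * ‖(u : ℂ) * c‖ *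
            Real.exp (σ₁' / ‖ε‖ * rb b β * ‖(u : ℂ) * c‖)) →
        (∀ u : ℝ, u ∈ Set.Icc (0 : ℝ) 1 →
          ‖v ((1 - (u : ℂ)) * c + (u : ℂ) * τ)‖ ≤
            N * ‖(1 - (u : ℂ)) * c + (u : ℂ) * τ‖ *
              Real.exp (σ₁' / ‖ε‖ * rb b β *
                ‖(1 - (u : ℂ)) * c + (u : ℂ) * τ‖)) →
        ‖τ‖ * ‖c * (∫ u in (0 : ℝ)..1,
               (τ - (u : ℂ) * c) ^ γ₀ * ((u : ℂ) * c) ^ γ₁ * v ((u : ℂ) * c))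
             + (τ - c) * (∫ u in (0 : ℝ)..1,
               (τ - ((1 - (u : ℂ)) * c + (u : ℂ) * τ)) ^ γ₀ *
                 ((1 - (u : ℂ)) * c + (u : ℂ) * τ) ^ γ₁ *
                 v ((1 - (u : ℂ)) * c + (u : ℂ) * τ))‖ ≤
          Cc * ‖ε‖ ^ (γ₀ + γ₁ + 2) * N * ‖τ‖ *
            Real.exp (σ₁ / ‖ε‖ * rb b β * ‖τ‖) := by
  have hgap : 0 < σ₁ - σ₁' := sub_pos.2 hσ₁
  refine ⟨3 * 2 ^ γ₀ * ((γ₀ + γ₁ + 2)! : ℝ) / (σ₁ - σ₁') ^ (γ₀ + γ₁ + 2), by positivity, ?_⟩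
  intro b _ ε hε β N hN τ c hc v _ _ hv₁ hv₂
  have hε' : 0 < ‖ε‖ := norm_pos_iff.2 hε
  have hrb := one_le_rb b β
  have ha : 0 ≤ σ₁' / ‖ε‖ * rb b β := by positivity
  have hI₁ := norm_integral_convolution_path_le γ₀ γ₁ _ hN ha
    (fun u hu => norm_ofReal_mul_le hu hc) hv₁
  have hI₂ := norm_integral_convolution_path_le γ₀ γ₁ _ hN ha
    (fun u hu => norm_one_sub_mul_add_mul_le hu hc) hv₂
  have hpow := pow_le_factorial_div_pow_mul_exp_s14 (div_pos hgap hε')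
    (le_mul_of_one_le_right (div_pos hgap hε').le hrb) (norm_nonneg τ) (γ₀ + γ₁ + 2)
  have hexp : Real.exp ((σ₁ - σ₁') / ‖ε‖ * rb b β * ‖τ‖) *
      Real.exp (σ₁' / ‖ε‖ * rb b β * ‖τ‖) = Real.exp (σ₁ / ‖ε‖ * rb b β * ‖τ‖) := by
    rw [← Real.exp_add]; congr 1; field_simp; ring
  calc _ ≤ ‖τ‖ * (3 * ‖τ‖ * (2 ^ γ₀ * ‖τ‖ ^ (γ₀ + γ₁ + 1) * N *
        Real.exp (σ₁' / ‖ε‖ * rb b β * ‖τ‖))) := by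
        gcongr; exact norm_mul_add_sub_mul_le hc hI₁ hI₂
    _ = 3 * 2 ^ γ₀ * N * ‖τ‖ * ‖τ‖ ^ (γ₀ + γ₁ + 2) *
        Real.exp (σ₁' / ‖ε‖ * rb b β * ‖τ‖) := by ring
    _ ≤ 3 * 2 ^ γ₀ * N * ‖τ‖ * (((γ₀ + γ₁ + 2)! : ℝ) / ((σ₁ - σ₁') / ‖ε‖) ^ (γ₀ + γ₁ + 2) *
        Real.exp ((σ₁ - σ₁') / ‖ε‖ * rb b β * ‖τ‖)) *
        Real.exp (σ₁' / ‖ε‖ * rb b β * ‖τ‖) := by gcongr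
    _ = _ := by rw [← hexp, div_pow]; field_simp
end
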